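/- Let b > 0 and let y = (y_1, y_2, y_3) ∈ ℕ³ with y_1 - y_3 = b, and set n = y_1 + y_2 + y_3. With k(y) the number of lattice paths from the origin to y all of whose points except y satisfy x_1 - x_3 < b, k_1*(y) the number of such paths starting from e_1 = (1,0,0), and k_2*(y) the number of such paths starting from e_2 = (0,1,0), the identities b · (n-1) · k_1*(y) = (b-1) · y_1 · k(y) and (n-1) · k_2*(y) = y_2 · k(y) hold; equivalently, k_1*(y)/k(y) = ((b-1)/b) · y_1/(n-1) and k_2*(y)/k(y) = y_2/(n-1). -/

import Mathlib

open scoped Classical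

/-- Number of lattice paths from `a` to `x`, each step adding one standard
basis vector, all of whose points (including the endpoints) lie in `A`. -/
noncomputable def pathCount {k : ℕ} (A : Set (Fin k → ℕ)) (a : Fin k → ℕ)
    (x : Fin k → ℕ) : ℕ :=
  if x = a then (if a ∈ A then 1 else 0)
  else if x ∈ A then
    ∑ i : Fin k, if h : 0 < x i then pathCount A a (Function.update x i (x i - 1)) else 0
  else 0
termination_by ∑ i, x i
decreasing_by
  have h1 := Finset.sum_update_of_mem (Finset.mem_univ i) x (x i - 1)
  have h2 := Finset.sum_eq_sum_sdiff_singleton_add (Finset.mem_univ i) x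
  omega

/-- Number of lattice paths from `a` to `y` all of whose points except `y`
lie in `R`. -/
noncomputable def exitCount {k : ℕ} (R : Set (Fin k → ℕ)) (a y : Fin k → ℕ) : ℕ :=
  pathCount (insert y R) a y

/-!
A path from `a` that first leaves the strip `x₀ - x₂ < b` at the boundary point `y` must enter
`y` along `e₀`, since `y - e₁` and `y - e₂` already lie outside the strip. By the reflection
principle in the plane `x₀ - x₂ = b`, which acts on displacements by swapping the coordinates
`0` and `2`, the number of such paths is `M(y - e₀ - a) - M(y - e₂ - a)`, with `M` the trinomial
coefficient. Both identities then follow from the absorption rule `(∑ v) M(v - eᵢ) = vᵢ M(v)`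
applied to `v = y - e₀` and `v = y - e₂`.
-/

open Finset Function

section NatCast

variable {ι : Type*} [DecidableEq ι]

theorem natCast_comp_update_pred {x : ι → ℕ} {i : ι} (hi : 0 < x i) :
    (Nat.cast ∘ update x i (x i - 1) : ι → ℤ) = Nat.cast ∘ x - Pi.single i 1 := by
  ext j
  by_cases hj : j = i
  · subst hj; simp; omega
  · simp [hj]

theorem natCast_comp_single (i : ι) : (Nat.cast ∘ Pi.single i 1 : ι → ℤ) = Pi.single i 1 := by
  ext j
  by_cases hj : j = i <;> simp [hj]

end NatCast

section IntMultinomial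

variable {ι : Type*} [Fintype ι]

noncomputable def intMultinomial (v : ι → ℤ) : ℤ :=
  if 0 ≤ v then Nat.multinomial univ (fun i ↦ (v i).toNat) else 0

theorem intMultinomial_of_not_nonneg {v : ι → ℤ} (hv : ¬0 ≤ v) : intMultinomial v = 0 :=
  if_neg hv

theorem intMultinomial_natCast (w : ι → ℕ) :
    intMultinomial (Nat.cast ∘ w : ι → ℤ) = Nat.multinomial univ w := by
  simp [intMultinomial, Pi.le_def]

@[simp]
theorem intMultinomial_zero : intMultinomial (0 : ι → ℤ) = 1 := by
  simp [intMultinomial, Nat.multinomial]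

theorem intMultinomial_comp_equiv (v : ι → ℤ) (σ : ι ≃ ι) :
    intMultinomial (v ∘ σ) = intMultinomial v := by
  have hnonneg : 0 ≤ v ∘ σ ↔ 0 ≤ v := by
    simp only [Pi.le_def, Pi.zero_apply, comp_apply]
    exact (σ.surjective.forall (p := fun i ↦ 0 ≤ v i)).symm
  simp only [intMultinomial, hnonneg, Nat.multinomial, comp_apply]
  rw [σ.sum_comp (fun i ↦ (v i).toNat), σ.prod_comp (fun i ↦ (v i).toNat.factorial)]

variable [DecidableEq ι]

theorem Nat.multinomial_univ_eq_choose_mul (w : ι → ℕ) (i : ι) :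
    Nat.multinomial univ w = (∑ j, w j).choose (w i) * Nat.multinomial (univ.erase i) w := by
  conv_lhs => rw [← insert_erase (mem_univ i)]
  rw [Nat.multinomial_insert (notMem_erase i _), add_sum_erase _ _ (mem_univ i)]

theorem Nat.add_one_sum_mul_multinomial (w : ι → ℕ) (i : ι) :
    (∑ j, w j + 1) * Nat.multinomial univ w
      = (w i + 1) * Nat.multinomial univ (w + Pi.single i 1) := by
  have hsum : ∑ j, (w + Pi.single i 1 : ι → ℕ) j = ∑ j, w j + 1 := by
    simp [sum_add_distrib]
  have herase : Nat.multinomial (univ.erase i) (w + Pi.single i 1)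
      = Nat.multinomial (univ.erase i) w :=
    Nat.multinomial_congr fun j hj ↦ by simp [(mem_erase.1 hj).1]
  rw [Nat.multinomial_univ_eq_choose_mul w i,
    Nat.multinomial_univ_eq_choose_mul (w + Pi.single i 1) i, hsum, herase]
  simp only [Pi.add_apply, Pi.single_eq_same]
  rw [← mul_assoc, Nat.add_one_mul_choose_eq]
  ring

theorem sum_mul_intMultinomial_sub_single (v : ι → ℤ) (i : ι) :
    (∑ j, v j) * intMultinomial (v - Pi.single i 1) = v i * intMultinomial v := by
  by_cases hv : 0 ≤ v - Pi.single i 1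
  · obtain ⟨w, hw⟩ : ∃ w : ι → ℕ, v - Pi.single i 1 = Nat.cast ∘ w :=
      ⟨fun j ↦ ((v - Pi.single i 1 : ι → ℤ) j).toNat,
        funext fun j ↦ (Int.toNat_of_nonneg (hv j)).symm⟩
    have hv' : v = Nat.cast ∘ (w + Pi.single i 1) := by
      rw [sub_eq_iff_eq_add.1 hw]
      ext j
      by_cases hj : j = i <;> simp [hj]
    have := congrArg (Nat.cast : ℕ → ℤ) (Nat.add_one_sum_mul_multinomial w i)
    rw [hw, hv', intMultinomial_natCast, intMultinomial_natCast]
    push_cast at this ⊢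
    simpa [sum_add_distrib, Pi.single_apply] using this
  · by_cases hv0 : 0 ≤ v
    · have hvi : v i = 0 := by
        by_contra hne
        refine hv fun j ↦ ?_
        have hj := hv0 j
        by_cases hji : j = i
        · subst hji; simp at hj ⊢; omega
        · simpa [hji] using hj
      rw [intMultinomial_of_not_nonneg hv, hvi]
      ring
    · rw [intMultinomial_of_not_nonneg hv, intMultinomial_of_not_nonneg hv0]
      ring

theorem intMultinomial_eq_sum_sub_single {v : ι → ℤ} (hv : v ≠ 0) :
    intMultinomial v = ∑ i, intMultinomial (v - Pi.single i 1) := by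
  by_cases hv0 : 0 ≤ v
  · have hsum : 0 < ∑ j, v j := Fintype.sum_pos (lt_of_le_of_ne hv0 hv.symm)
    refine mul_left_cancel₀ hsum.ne' ?_
    rw [mul_sum]
    simp only [sum_mul_intMultinomial_sub_single, ← sum_mul]
  · have hsub : ∀ i, ¬0 ≤ v - Pi.single i 1 := fun i h ↦
      hv0 (h.trans (sub_le_self _ (Pi.single_nonneg.2 zero_le_one)))
    simp [intMultinomial_of_not_nonneg, hv0, hsub]

end IntMultinomial

section PathCount

variable {k : ℕ} {A : Set (Fin k → ℕ)} {a : Fin k → ℕ}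

theorem sum_update_pred_lt {x : Fin k → ℕ} {i : Fin k} (hi : 0 < x i) :
    ∑ j, update x i (x i - 1) j < ∑ j, x j := by
  have h1 := sum_update_of_mem (mem_univ i) x (x i - 1)
  have h2 := sum_eq_sum_sdiff_singleton_add (mem_univ i) x
  omega

theorem pathCount_of_notMem {x : Fin k → ℕ} (hx : x ∉ A) : pathCount A a x = 0 := by
  rw [pathCount]
  split_ifs with hxa <;> simp_all

theorem pathCount_insert_of_sum_lt {x y : Fin k → ℕ} (h : ∑ i, x i < ∑ i, y i) :
    pathCount (insert y A) a x = pathCount A a x := by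
  have hne : ∀ z, ∑ i, z i < ∑ i, y i → (z ∈ insert y A ↔ z ∈ A) := fun z hz ↦
    or_iff_right (by rintro rfl; exact hz.false)
  by_cases hxa : x = a
  · subst hxa
    rw [pathCount, pathCount, if_pos rfl, if_pos rfl, hne x h]
  · rw [pathCount, pathCount, if_neg hxa, if_neg hxa, hne x h]
    congr 1
    refine sum_congr rfl fun i _ ↦ dite_congr rfl (fun hi ↦ ?_) fun _ ↦ rfl
    exact pathCount_insert_of_sum_lt ((sum_update_pred_lt hi).trans h)
termination_by ∑ i, x i
decreasing_by exact sum_update_pred_lt hi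

end PathCount

section Strip

def strip (b : ℤ) : Set (Fin 3 → ℕ) := {x | (x 0 : ℤ) - x 2 < b}

theorem mem_strip {b : ℤ} {x : Fin 3 → ℕ} : x ∈ strip b ↔ (x 0 : ℤ) - x 2 < b := Iff.rfl

/-- Reflection of `ℤ³` in the plane `v₀ - v₂ = b`. -/
def reflect (b : ℤ) (v : Fin 3 → ℤ) : Fin 3 → ℤ := ![v 2 + b, v 1, v 0 - b]

@[simp] theorem reflect_apply_zero (b : ℤ) (v : Fin 3 → ℤ) : reflect b v 0 = v 2 + b := rfl

@[simp] theorem reflect_apply_one (b : ℤ) (v : Fin 3 → ℤ) : reflect b v 1 = v 1 := rfl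

@[simp] theorem reflect_apply_two (b : ℤ) (v : Fin 3 → ℤ) : reflect b v 2 = v 0 - b := rfl

theorem reflect_of_boundary {b : ℤ} {v : Fin 3 → ℤ} (hv : v 0 - v 2 = b) : reflect b v = v := by
  ext i; fin_cases i <;> simp <;> omega

theorem reflect_sub_reflect (b : ℤ) (v w : Fin 3 → ℤ) :
    reflect b v - reflect b w = (v - w) ∘ Equiv.swap 0 2 := by
  ext i; fin_cases i <;> simp [reflect, Equiv.swap_apply_of_ne_of_ne]

theorem intMultinomial_sub_reflect_of_boundary {b : ℤ} {v : Fin 3 → ℤ} (hv : v 0 - v 2 = b)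
    (w : Fin 3 → ℤ) : intMultinomial (v - reflect b w) = intMultinomial (v - w) := by
  conv_lhs => rw [← reflect_of_boundary hv, reflect_sub_reflect, intMultinomial_comp_equiv]

noncomputable def stripCount (b : ℤ) (a x : Fin 3 → ℕ) : ℤ :=
  intMultinomial (Nat.cast ∘ x - Nat.cast ∘ a)
    - intMultinomial (Nat.cast ∘ x - reflect b (Nat.cast ∘ a))

variable {b : ℤ} {a : Fin 3 → ℕ}

theorem stripCount_of_boundary {x : Fin 3 → ℕ} (hx : (x 0 : ℤ) - x 2 = b) :
    stripCount b a x = 0 := by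
  rw [stripCount, intMultinomial_sub_reflect_of_boundary (by simpa using hx), sub_self]

theorem stripCount_self (ha : (a 0 : ℤ) - a 2 ≤ b) :
    stripCount b a a = if a ∈ strip b then 1 else 0 := by
  split_ifs with haS
  · rw [stripCount, sub_self, intMultinomial_zero, intMultinomial_of_not_nonneg fun h ↦ ?_,
      sub_zero]
    have := h 0
    simp [mem_strip] at this haS
    omega
  · exact stripCount_of_boundary (by rw [mem_strip] at haS; omega)

theorem stripCount_eq_sum (ha : (a 0 : ℤ) - a 2 ≤ b) {x : Fin 3 → ℕ} (hx : x ∈ strip b)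
    (hxa : x ≠ a) :
    stripCount b a x = ∑ i, if 0 < x i then stripCount b a (update x i (x i - 1)) else 0 := by
  rw [mem_strip] at hx
  have hne : Nat.cast ∘ x - Nat.cast ∘ a ≠ (0 : Fin 3 → ℤ) :=
    sub_ne_zero.2 ((Nat.cast_injective.comp_left).ne hxa)
  have hne' : Nat.cast ∘ x - reflect b (Nat.cast ∘ a) ≠ 0 := fun h ↦ by
    have := congrFun h 0; have := congrFun h 2; simp at *; omega
  rw [stripCount, intMultinomial_eq_sum_sub_single hne, intMultinomial_eq_sum_sub_single hne',
    ← sum_sub_distrib]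
  refine sum_congr rfl fun i _ ↦ ?_
  split_ifs with hi
  · rw [stripCount, natCast_comp_update_pred hi, sub_right_comm, sub_right_comm _ (reflect _ _)]
  · have hxi : x i = 0 := by omega
    have h₁ : ¬0 ≤ (Nat.cast ∘ x - Nat.cast ∘ a : Fin 3 → ℤ) - Pi.single i 1 := fun h ↦ by
      have := h i; simp [hxi] at this; omega
    -- for `i = 2` it is the `0`-th coordinate that becomes negative, since `x 0 < b`
    have h₂ : ¬0 ≤ Nat.cast ∘ x - reflect b (Nat.cast ∘ a) - Pi.single i 1 := fun h ↦ by
      have h0 := h 0; have h1 := h 1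
      fin_cases i <;> simp at h0 h1 hxi <;> omega
    rw [intMultinomial_of_not_nonneg h₁, intMultinomial_of_not_nonneg h₂, sub_self]

theorem pathCount_strip_eq (ha : (a 0 : ℤ) - a 2 ≤ b) (x : Fin 3 → ℕ)
    (hx : (x 0 : ℤ) - x 2 ≤ b) : (pathCount (strip b) a x : ℤ) = stripCount b a x := by
  rw [pathCount]
  by_cases hxa : x = a
  · subst hxa
    rw [if_pos rfl, stripCount_self ha, Nat.cast_ite, Nat.cast_one, Nat.cast_zero]
  rw [if_neg hxa]
  split_ifs with hxS
  · push_cast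
    rw [stripCount_eq_sum ha hxS hxa]
    refine sum_congr rfl fun i _ ↦ ?_
    split_ifs with hi
    · have hxS' := mem_strip.1 hxS
      exact pathCount_strip_eq ha _ (by fin_cases i <;> simp <;> omega)
    · rfl
  · rw [stripCount_of_boundary (by rw [mem_strip] at hxS; omega), Nat.cast_zero]
termination_by ∑ i, x i
decreasing_by exact sum_update_pred_lt hi

theorem exitCount_strip_eq (hb : 0 < b) (ha : (a 0 : ℤ) - a 2 ≤ b) {y : Fin 3 → ℕ}
    (hy : (y 0 : ℤ) - y 2 = b) (hya : y ≠ a) :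
    (exitCount (strip b) a y : ℤ)
      = intMultinomial (Nat.cast ∘ y - Pi.single 0 1 - Nat.cast ∘ a)
        - intMultinomial (Nat.cast ∘ y - Pi.single 2 1 - Nat.cast ∘ a) := by
  have hy0 : 0 < y 0 := by omega
  have hother : ∀ i ≠ 0, (if hi : 0 < y i then
      pathCount (insert y (strip b)) a (update y i (y i - 1)) else 0) = 0 := by
    refine fun i hi0 ↦ dite_eq_right_iff.2 fun hi ↦ pathCount_of_notMem ?_
    rintro (h | h)
    · have := congrFun h i; simp at this; omega
    · fin_cases i <;> simp [mem_strip] at h hi0 <;> omega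
  have hlast : exitCount (strip b) a y = pathCount (strip b) a (update y 0 (y 0 - 1)) := by
    rw [exitCount, pathCount, if_neg hya, if_pos (Set.mem_insert _ _), Fin.sum_univ_three,
      hother 1 (by decide), hother 2 (by decide), dif_pos hy0,
      pathCount_insert_of_sum_lt (sum_update_pred_lt hy0), add_zero, add_zero]
  have hswap : (Nat.cast ∘ y - Pi.single 0 1 - reflect b (Nat.cast ∘ a)) ∘ Equiv.swap 0 2
      = Nat.cast ∘ y - Pi.single 2 1 - Nat.cast ∘ a := by
    ext i; fin_cases i <;> simp [Equiv.swap_apply_of_ne_of_ne] <;> omega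
  rw [hlast, pathCount_strip_eq ha _ (by simp; omega), stripCount, natCast_comp_update_pred hy0,
    ← hswap, intMultinomial_comp_equiv]

end Strip

/-- For `b > 0` and a boundary point `y ∈ ℕ³` with
`y₁ - y₃ = b` and `n = y₁ + y₂ + y₃`, with `k(y)` the number of paths from the
origin staying in `R = {x : x₁ - x₃ < b}` except at `y`, and `kᵢ*(y)` the
number of such paths from `eᵢ`, the identities
`b·(n-1)·k₁*(y) = (b-1)·y₁·k(y)` and `(n-1)·k₂*(y) = y₂·k(y)` hold, i.e.
`k₁*(y)/k(y) = ((b-1)/b)·y₁/(n-1)` and `k₂*(y)/k(y) = y₂/(n-1)`. -/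
theorem estimator_count_identities_line (b : ℤ) (hb : 0 < b) (y : Fin 3 → ℕ)
    (hy : (y 0 : ℤ) - (y 2 : ℤ) = b) (n : ℕ) (hn : n = y 0 + y 1 + y 2) :
    (b * ((n : ℤ) - 1) *
        (exitCount {x : Fin 3 → ℕ | (x 0 : ℤ) - (x 2 : ℤ) < b}
          (Pi.single 0 1) y : ℤ)
      = (b - 1) * (y 0 : ℤ) *
        (exitCount {x : Fin 3 → ℕ | (x 0 : ℤ) - (x 2 : ℤ) < b} 0 y : ℤ)) ∧
    (((n : ℤ) - 1) *
        (exitCount {x : Fin 3 → ℕ | (x 0 : ℤ) - (x 2 : ℤ) < b}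
          (Pi.single 1 1) y : ℤ)
      = (y 1 : ℤ) *
        (exitCount {x : Fin 3 → ℕ | (x 0 : ℤ) - (x 2 : ℤ) < b} 0 y : ℤ)) := by
  rw [show {x : Fin 3 → ℕ | (x 0 : ℤ) - (x 2 : ℤ) < b} = strip b from rfl]
  have hy0 : 0 < y 0 := by omega
  have habsorb : ∀ i j (c : ℤ), (Nat.cast ∘ y - Pi.single i 1 : Fin 3 → ℤ) j = c →
      ((n : ℤ) - 1) * intMultinomial (Nat.cast ∘ y - Pi.single i 1 - Pi.single j 1)
        = c * intMultinomial (Nat.cast ∘ y - Pi.single i 1) := by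
    rintro i j c rfl
    rw [← sum_mul_intMultinomial_sub_single]
    simp [sum_sub_distrib, Fin.sum_univ_three, hn]
  have hk := exitCount_strip_eq hb (a := 0) (by simp; omega) hy (fun h ↦ by simp [h] at hy0)
  simp only [Pi.comp_zero, Nat.cast_zero, const_zero, sub_zero] at hk
  refine ⟨?_, ?_⟩
  · -- the exit formula needs `y ≠ e₀`; at `y = e₀` both sides vanish since `n = b = 1`
    rcases eq_or_ne y (Pi.single 0 1) with rfl | hy₁
    · simp_all
    have hk₁ := exitCount_strip_eq hb (a := Pi.single 0 1) (by simp; omega) hy hy₁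
    have h02 := habsorb 0 2 (y 2) (by simp)
    rw [natCast_comp_single] at hk₁
    rw [sub_right_comm _ (Pi.single 0 1)] at h02
    rw [hk, hk₁]
    linear_combination b * habsorb 0 0 ((y 0 : ℤ) - 1) (by simp) - h02
      + (1 - b) * habsorb 2 0 (y 0) (by simp)
      + intMultinomial (Nat.cast ∘ y - Pi.single 0 1 : Fin 3 → ℤ) * hy
  · have hk₂ := exitCount_strip_eq hb (a := Pi.single 1 1) (by simp; omega) hy
      (fun h ↦ by simp [h] at hy0)
    rw [natCast_comp_single] at hk₂
    rw [hk, hk₂]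
    linear_combination habsorb 0 1 (y 1) (by simp) - habsorb 2 1 (y 1) (by simp)
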